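/- arXiv:1707.04660 — 2 statements merged into one kernel-verified Lean document; each statement's English description precedes it below -/
import Mathlib

section
/- Let M ⊨ ZFC and let p(v) be an ω-minimal type over M. Then p(v) is ω-end extensional: whenever N is an elementary end extension of M obtained by adjoining a witness for p(v), for every α ∈ ω^M and every β ∈ ω^N \ ω^M we have α < β. -/
/-! ## Basic syntax: the language of set theory, with and without a global choice
function symbol, and the first-order theories ZF, ZFC, ZFGC. -/

open FirstOrder FirstOrder.Language

namespace CMST

/-- The single binary relation symbol `∈` of the language of set theory. -/
inductive MemRel : ℕ → Type
  | mem : MemRel 2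

/-- The unary function symbol `F` for a global choice function. -/
inductive GCFn : ℕ → Type
  | F : GCFn 1

/-- The language of set theory: one binary relation `∈`. -/
def setLang : Language := ⟨fun _ => Empty, MemRel⟩

/-- The language of set theory with an additional unary function symbol `F`
(for a global choice function). -/
def gcLang : Language := ⟨GCFn, MemRel⟩

instance : ∀ n, Countable (setLang.Functions n) := fun _ => by
  unfold setLang; infer_instance

/-- Shorthand for the atomic membership formula `t₁ ∈ t₂`. -/
def memB {L : Language} (m : L.Relations 2) {α : Type*} {n : ℕ}
    (t₁ t₂ : L.Term (α ⊕ Fin n)) : L.BoundedFormula α n :=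
  m.boundedFormula₂ t₁ t₂

section Axioms

variable {L : Language} (m : L.Relations 2)

/-- Extensionality. -/
def extAx : L.Sentence :=
  ∀' ∀' ((∀' (memB m (&2) (&0) ⇔ memB m (&2) (&1))) ⟹ Term.bdEqual (&0) (&1))

/-- Pairing. -/
def pairAx : L.Sentence :=
  ∀' ∀' ∃' ∀' (memB m (&3) (&2) ⇔ (Term.bdEqual (&3) (&0) ⊔ Term.bdEqual (&3) (&1)))

/-- Union. -/
def unionAx : L.Sentence :=
  ∀' ∃' ∀' (memB m (&2) (&1) ⇔ ∃' (memB m (&2) (&3) ⊓ memB m (&3) (&0)))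

/-- Power set. -/
def powerAx : L.Sentence :=
  ∀' ∃' ∀' (memB m (&2) (&1) ⇔ ∀' (memB m (&3) (&2) ⟹ memB m (&3) (&0)))

/-- Infinity. -/
def infinityAx : L.Sentence :=
  ∃' ((∃' (memB m (&1) (&0) ⊓ ∀' ∼(memB m (&2) (&1)))) ⊓
    ∀' (memB m (&1) (&0) ⟹
      ∃' (memB m (&2) (&0) ⊓
        ∀' (memB m (&3) (&2) ⇔ (memB m (&3) (&1) ⊔ Term.bdEqual (&3) (&1))))))

/-- Foundation. -/
def foundationAx : L.Sentence :=
  ∀' ((∃' (memB m (&1) (&0))) ⟹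
    ∃' (memB m (&1) (&0) ⊓ ∀' ∼(memB m (&2) (&0) ⊓ memB m (&2) (&1))))

/-- The separation axiom for the formula `φ(v₀,…,v_{n-1}, z)`; the variables
`v₀,…,v_{n-1}` serve as parameters. -/
def sepAx {n : ℕ} (φ : L.BoundedFormula Empty (n + 1)) : L.Sentence :=
  (∀' ∃' ∀' (memB m (Term.var (Sum.inr ⟨n + 2, by omega⟩)) (Term.var (Sum.inr ⟨n + 1, by omega⟩)) ⇔
    (memB m (Term.var (Sum.inr ⟨n + 2, by omega⟩)) (Term.var (Sum.inr ⟨n, by omega⟩)) ⊓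
      φ.liftAt 2 n))).alls

/-- The replacement axiom for the formula `φ(v₀,…,v_{n-1}, x, y)`; the variables
`v₀,…,v_{n-1}` serve as parameters: if `φ` defines a (partial) function then the image of
any set under it is contained in a set. -/
def replAx {n : ℕ} (φ : L.BoundedFormula Empty (n + 2)) : L.Sentence :=
  (((∀' ∀' ∀' ((φ.liftAt 1 (n + 2) ⊓ φ.liftAt 1 (n + 1)) ⟹
        Term.bdEqual (Term.var (Sum.inr ⟨n + 1, by omega⟩)) (Term.var (Sum.inr ⟨n + 2, by omega⟩)))) ⟹
      (∀' ∃' ∀' (memB m (Term.var (Sum.inr ⟨n + 2, by omega⟩)) (Term.var (Sum.inr ⟨n, by omega⟩)) ⟹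
        ∃' (memB m (Term.var (Sum.inr ⟨n + 3, by omega⟩)) (Term.var (Sum.inr ⟨n + 1, by omega⟩)) ⊓
          φ.liftAt 2 n))))).alls

/-- The axiom of choice: every family of nonempty pairwise disjoint sets has a selector. -/
def choiceAx : L.Sentence :=
  ∀' (((∀' (memB m (&1) (&0) ⟹ ∃' (memB m (&2) (&1)))) ⊓
      (∀' ∀' ((memB m (&1) (&0) ⊓ memB m (&2) (&0) ⊓ ∼(Term.bdEqual (&1) (&2))) ⟹
        ∀' ∼(memB m (&3) (&1) ⊓ memB m (&3) (&2))))) ⟹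
    ∃' ∀' (memB m (&2) (&0) ⟹
      ∃' ((memB m (&3) (&2) ⊓ memB m (&3) (&1)) ⊓
        ∀' ((memB m (&4) (&2) ⊓ memB m (&4) (&1)) ⟹ Term.bdEqual (&4) (&3)))))

/-- The axioms of ZF relative to a membership relation symbol `m`, so that they can be
used both in `setLang` and in `gcLang` (where the separation and replacement schemes
range over formulas mentioning the global choice symbol). -/
def ZFaxioms : L.Theory :=
  {extAx m, pairAx m, unionAx m, powerAx m, infinityAx m, foundationAx m} ∪
    (⋃ n : ℕ, Set.range fun φ : L.BoundedFormula Empty (n + 1) => sepAx m φ) ∪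
    (⋃ n : ℕ, Set.range fun φ : L.BoundedFormula Empty (n + 2) => replAx m φ)

end Axioms

/-- The theory ZFC in the language of set theory. -/
def ZFC : setLang.Theory := ZFaxioms MemRel.mem ∪ {choiceAx MemRel.mem}

/-- The global choice axiom: `F(x) ∈ x` for every nonempty `x`. -/
def globalChoiceAx : gcLang.Sentence :=
  ∀' ((∃' (memB (L := gcLang) MemRel.mem (&1) (&0))) ⟹
    memB (L := gcLang) MemRel.mem (Term.func GCFn.F ![&0]) (&0))

/-- The theory ZFGC: ZF together with the global choice axiom (the separation and
replacement schemes range over all formulas of the expanded language). -/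
def ZFGC : gcLang.Theory := ZFaxioms MemRel.mem ∪ {globalChoiceAx}

end CMST

/-! ## Semantics in models of set theory: natural numbers, ω-types, ω-minimal types,
end extensions, Skolem functions and ω-gaps. -/

namespace CMST

open FirstOrder FirstOrder.Language

variable {L : FirstOrder.Language}

/-- The membership relation of a model of set theory. -/
def memr (m : L.Relations 2) {M : Type*} [L.Structure M] (a b : M) : Prop :=
  Structure.RelMap m ![a, b]

/-- The term denoting the distinguished free variable `v` in formulas with free variables
from `α ⊕ Fin 1`. -/
def vt {α : Type*} {n : ℕ} : L.Term ((α ⊕ Fin 1) ⊕ Fin n) :=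
  Term.var (Sum.inl (Sum.inr 0))

/-- The formula (in the free variable `v`) expressing `v < ω`, i.e. that `v` is a
(von Neumann) natural number: `v` is transitive, linearly ordered by `∈`, and every member
of `v ∪ {v}` is zero or a successor. -/
def natFormula (m : L.Relations 2) (α : Type*) : L.Formula (α ⊕ Fin 1) :=
  (∀' ∀' ((memB m (&0) (&1) ⊓ memB m (&1) vt) ⟹ memB m (&0) vt)) ⊓
  (∀' ∀' ((memB m (&0) vt ⊓ memB m (&1) vt) ⟹
    (memB m (&0) (&1) ⊔ Term.bdEqual (&0) (&1) ⊔ memB m (&1) (&0)))) ⊓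
  (∀' ((memB m (&0) vt ⊔ Term.bdEqual (&0) vt) ⟹
    ((∀' ∼(memB m (&1) (&0))) ⊔
      ∃' (memB m (&1) (&0) ⊓ ∀' (memB m (&2) (&0) ⇔ (memB m (&2) (&1) ⊔ Term.bdEqual (&2) (&1)))))))

/-- The formula (with one free variable `v` and a parameter `c`) expressing `c < v`
(that is, `c ∈ v`, as ordinals are ordered by membership). -/
def paramLtFormula (m : L.Relations 2) {α : Type*} (c : α) : L.Formula (α ⊕ Fin 1) :=
  memB m (Term.var (Sum.inl (Sum.inl c))) vt

/-- The set `ω^M` of natural numbers of a model of set theory `M`. -/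
def omegaSet (m : L.Relations 2) (M : Type*) [L.Structure M] : Set M :=
  {a | (natFormula m M).Realize (Sum.elim id fun _ => a)}

/-- Realization of a formula `φ(v)` with parameters from `M`, at the point `b` of a
structure `N`, transferring the parameters along `h : M → N`. -/
def RealizeWith {M N : Type*} [L.Structure N] (h : M → N)
    (φ : L.Formula (M ⊕ Fin 1)) (b : N) : Prop :=
  φ.Realize (Sum.elim h fun _ => b)

/-- `b` realizes (all formulas of) the type `p` in `N`, parameters transferred along `h`. -/
def RealizesType {M N : Type*} [L.Structure N] (h : M → N)
    (p : Set (L.Formula (M ⊕ Fin 1))) (b : N) : Prop :=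
  ∀ φ ∈ p, RealizeWith h φ b

/-- `p` is a complete type over `M` in the single variable `v`: it decides every formula
and is finitely satisfiable in `M` (equivalently, consistent with the elementary diagram). -/
def IsTypeOver (M : Type*) [L.Structure M] (p : Set (L.Formula (M ⊕ Fin 1))) : Prop :=
  (∀ φ : L.Formula (M ⊕ Fin 1), φ ∈ p ∨ φ.not ∈ p) ∧
    ∀ s : Finset (L.Formula (M ⊕ Fin 1)), ↑s ⊆ p →
      ∃ a : M, ∀ φ ∈ s, RealizeWith (id : M → M) φ a

/-- The type `p` is indiscernible: in any elementary extension `N` of `M`, any two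
`∈`-increasing tuples of realizations of `p` satisfy the same formulas with parameters
from `M`. -/
def IndiscernibleType (m : L.Relations 2) (M : Type) [L.Structure M]
    (p : Set (L.Formula (M ⊕ Fin 1))) : Prop :=
  ∀ (N : Type) [L.Structure N], ∀ (h : M ↪ₑ[L] N) (k : ℕ) (a b : Fin (k + 1) → N),
    (∀ i, RealizesType h p (a i)) → (∀ i, RealizesType h p (b i)) →
    (∀ i j, i < j → memr m (a i) (a j)) → (∀ i j, i < j → memr m (b i) (b j)) →
    ∀ φ : L.Formula (M ⊕ Fin (k + 1)), φ.Realize (Sum.elim h a) ↔ φ.Realize (Sum.elim h b)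

/-- `p` is an ω-minimal type over `M`: a complete type containing `v < ω`, which is
ω-unbounded (contains `α < v` for every `α ∈ ω^M`) and indiscernible. -/
structure OmegaMinimal (m : L.Relations 2) (M : Type) [L.Structure M]
    (p : Set (L.Formula (M ⊕ Fin 1))) : Prop where
  isType : IsTypeOver M p
  omegaType : natFormula m M ∈ p
  unbounded : ∀ a ∈ omegaSet m M, paramLtFormula m a ∈ p
  indisc : IndiscernibleType m M p

/-- `h : M → N` is an end extension: members of old sets are old. -/
def IsEndExtension (m : L.Relations 2) {M N : Type*} [L.Structure M] [L.Structure N]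
    (h : M → N) : Prop :=
  ∀ (b : N) (a : M), memr m b (h a) → ∃ a' : M, h a' = b

/-- `h : M → N` is an ω-end extension: members of old natural numbers are old. -/
def IsOmegaEndExtension (m : L.Relations 2) {M N : Type*} [L.Structure M] [L.Structure N]
    (h : M → N) : Prop :=
  ∀ (b : N) (a : M), a ∈ omegaSet m M → memr m b (h a) → ∃ a' : M, h a' = b

/-- `N` is generated (as the Skolem hull / prime model) over the image of `h` together
with `X`: no proper elementary substructure contains `range h ∪ X`. -/
def GeneratesOver {M N : Type*} [L.Structure M] [L.Structure N] (h : M → N)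
    (X : Set N) : Prop :=
  ∀ S : L.ElementarySubstructure N, Set.range h ∪ X ⊆ (S : Set N) → ∀ x : N, x ∈ S

/-- `N` (with embedding `h` and distinguished element `d`) is an elementary extension of
`M` obtained by adjoining a witness `d` of the type `p`, i.e. it is a prime model of the
elementary diagram of `M` together with `p(d)`. -/
structure WitnessExtension (m : L.Relations 2) (M N : Type) [L.Structure M] [L.Structure N]
    (p : Set (L.Formula (M ⊕ Fin 1))) (h : M ↪ₑ[L] N) (d : N) : Prop where
  realizes : RealizesType h p d
  generates : GeneratesOver (L := L) h ({d} : Set N)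
  prime : ∀ (N' : Type) [L.Structure N'], ∀ (h' : M ↪ₑ[L] N') (d' : N'),
    RealizesType h' p d' →
      ∃ g : N ↪ₑ[L] N', (∀ x : M, g (h x) = h' x) ∧ g d = d'

/-- A definable (Skolem) function of a model `N`: a function whose graph is defined by a
parameter-free formula.  (In models of ZFGC these are exactly the Skolem functions, as
ZFGC has definable Skolem functions.) -/
def IsSkolemFun (N : Type*) [L.Structure N] (f : N → N) : Prop :=
  ∃ φ : L.Formula (Fin 2), ∀ x y : N, φ.Realize ![x, y] ↔ f x = y

/-- `N_ω(β)`: the set of `α ∈ ω^N` such that `α < t(β)` for some Skolem function `t`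
with `t(β) ∈ ω^N`. -/
def omegaBelow (m : L.Relations 2) {N : Type*} [L.Structure N] (β : N) : Set N :=
  {a | a ∈ omegaSet m N ∧
    ∃ f : N → N, IsSkolemFun (L := L) N f ∧ f β ∈ omegaSet m N ∧ memr m a (f β)}

/-- `N_ω[β]`: the set of `α ∈ ω^N` such that `t(α) < β` for every Skolem function `t`
with `t(α) ∈ ω^N`. -/
def omegaFarBelow (m : L.Relations 2) {N : Type*} [L.Structure N] (β : N) : Set N :=
  {a | a ∈ omegaSet m N ∧
    ∀ f : N → N, IsSkolemFun (L := L) N f → f a ∈ omegaSet m N → memr m (f a) β}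

/-- The ω-gap of `β`: `gap_ω(β) = N_ω(β) \ N_ω[β]`. -/
def gapOmega (m : L.Relations 2) {N : Type*} [L.Structure N] (β : N) : Set N :=
  omegaBelow m β \ omegaFarBelow m β

/-- The canonical `I`-model `M(I)`: `N` is a prime model (Skolem hull of
`M ∪ {α_i : i ∈ I}`) of the theory `Diag_el(M) ∪ ⋃_{i∈I} p(α_i) ∪ {α_i ∈ α_j : i < j}`. -/
structure CanonicalModel (m : L.Relations 2) (M : Type) [L.Structure M]
    (p : Set (L.Formula (M ⊕ Fin 1))) (I : Type) [LinearOrder I]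
    (N : Type) [L.Structure N] (h : M ↪ₑ[L] N) (a : I → N) : Prop where
  realizes : ∀ i, RealizesType h p (a i)
  increasing : ∀ i j : I, i < j → memr m (a i) (a j)
  generates : GeneratesOver (L := L) h (Set.range a)
  prime : ∀ (N' : Type) [L.Structure N'], ∀ (h' : M ↪ₑ[L] N') (a' : I → N'),
    (∀ i, RealizesType h' p (a' i)) → (∀ i j : I, i < j → memr m (a' i) (a' j)) →
      ∃ g : N ↪ₑ[L] N', (∀ x : M, g (h x) = h' x) ∧ ∀ i, g (a i) = a' i

end CMST

namespace CMST

open FirstOrder FirstOrder.Language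

section Semantics

variable {K : Type*} [setLang.Structure K]

/-- Abbreviation for the membership relation. -/
local notation a " ∈* " b => memr (L := setLang) MemRel.mem a b

/-- Semantic content of `natFormula`. -/
def NatSem (K : Type*) [setLang.Structure K] (x : K) : Prop :=
  ((∀ z w : K, (z ∈* w) → (w ∈* x) → (z ∈* x)) ∧
    ∀ z w : K, (z ∈* x) → (w ∈* x) → ((z ∈* w) ∨ z = w) ∨ (w ∈* z)) ∧
  ∀ y : K, ((y ∈* x) ∨ y = x) →
    (∀ z : K, ¬(z ∈* y)) ∨ ∃ s, (s ∈* y) ∧ ∀ z : K, (z ∈* y) ↔ (z ∈* s) ∨ z = s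

theorem realize_natFormula {α : Type*} (v : α → K) (x : K) :
    (natFormula (L := setLang) MemRel.mem α).Realize (Sum.elim v fun _ => x) ↔ NatSem K x := by
  simp [natFormula, memB, vt, NatSem, memr, Formula.Realize, Fin.snoc, BoundedFormula.realize_rel₂ (L := setLang) (R := MemRel.mem)]

theorem mem_omegaSet_iff (x : K) :
    x ∈ omegaSet (L := setLang) MemRel.mem K ↔ NatSem K x :=
  realize_natFormula id x

/-- Semantic ordinal: transitive and linearly ordered by membership. -/
def IsOrdSem (x : K) : Prop :=
  (∀ z w : K, (z ∈* w) → (w ∈* x) → (z ∈* x)) ∧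
    ∀ z w : K, (z ∈* x) → (w ∈* x) → (z ∈* w) ∨ z = w ∨ (w ∈* z)

theorem NatSem.isOrdSem {x : K} (hx : NatSem K x) : IsOrdSem x := by
  refine ⟨hx.1.1, fun z w hz hw => ?_⟩
  rcases hx.1.2 z w hz hw with (h | h) | h
  · exact Or.inl h
  · exact Or.inr (Or.inl h)
  · exact Or.inr (Or.inr h)

variable (hK : K ⊨ ZFC)
include hK

theorem zfc_ext : ∀ x y : K, (∀ z : K, (z ∈* x) ↔ (z ∈* y)) → x = y := by
  have hmem : extAx (L := setLang) MemRel.mem ∈ ZFC := by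
    unfold ZFC ZFaxioms; left; left; simp [extAx]
  have := hK.realize_of_mem _ hmem
  simpa [extAx, memB, memr, Sentence.Realize, Formula.Realize, Fin.snoc, BoundedFormula.realize_rel₂ (L := setLang) (R := MemRel.mem)] using this

theorem zfc_pair : ∀ x y : K, ∃ p : K, ∀ z : K, (z ∈* p) ↔ z = x ∨ z = y := by
  have hmem : pairAx (L := setLang) MemRel.mem ∈ ZFC := by
    unfold ZFC ZFaxioms; left; left; simp [pairAx]
  have := hK.realize_of_mem _ hmem
  simpa [pairAx, memB, memr, Sentence.Realize, Formula.Realize, Fin.snoc, BoundedFormula.realize_rel₂ (L := setLang) (R := MemRel.mem)] using this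

theorem zfc_foundation :
    ∀ x : K, (∃ y : K, (y ∈* x)) →
      ∃ y : K, (y ∈* x) ∧ ∀ z : K, ¬((z ∈* x) ∧ (z ∈* y)) := by
  have hmem : foundationAx (L := setLang) MemRel.mem ∈ ZFC := by
    unfold ZFC ZFaxioms; left; left; simp [foundationAx]
  have := hK.realize_of_mem _ hmem
  simpa [foundationAx, memB, memr, Sentence.Realize, Formula.Realize, Fin.snoc, BoundedFormula.realize_rel₂ (L := setLang) (R := MemRel.mem)] using this

theorem zfc_sep_inter :
    ∀ c a : K, ∃ s : K, ∀ z : K, (z ∈* s) ↔ (z ∈* a) ∧ (z ∈* c) := by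
  have hmem : sepAx (L := setLang) MemRel.mem
      (memB (L := setLang) MemRel.mem (&1) (&0) : setLang.BoundedFormula Empty 2) ∈ ZFC := by
    unfold ZFC ZFaxioms
    left; left; right
    exact Set.mem_iUnion.2 ⟨1, Set.mem_range.2 ⟨_, rfl⟩⟩
  have := hK.realize_of_mem _ hmem
  simp only [sepAx, Sentence.Realize, BoundedFormula.realize_alls] at this
  intro c a
  have h2 := this ![c]
  simp only [BoundedFormula.realize_all, BoundedFormula.realize_ex,
    BoundedFormula.realize_iff, BoundedFormula.realize_inf, BoundedFormula.realize_rel₂ (L := setLang) (R := MemRel.mem),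
    Term.realize_var, Sum.elim_inr] at h2
  obtain ⟨s, hs⟩ := h2 a
  refine ⟨s, fun z => ?_⟩
  have h4 := hs z
  simp only [memB, BoundedFormula.realize_rel₂ (L := setLang) (R := MemRel.mem), Term.realize_var, Sum.elim_inr,
    BoundedFormula.realize_liftAt (m := 1) (n := 1 + 1) (n' := 2) (by norm_num),
    Function.comp_apply] at h4
  simpa [memr, Fin.snoc] using h4

theorem zfc_sep_diff :
    ∀ c a : K, ∃ s : K, ∀ z : K, (z ∈* s) ↔ (z ∈* a) ∧ ¬(z ∈* c) := by
  have hmem : sepAx (L := setLang) MemRel.mem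
      (∼(memB (L := setLang) MemRel.mem (&1) (&0)) : setLang.BoundedFormula Empty 2) ∈ ZFC := by
    unfold ZFC ZFaxioms
    left; left; right
    exact Set.mem_iUnion.2 ⟨1, Set.mem_range.2 ⟨_, rfl⟩⟩
  have := hK.realize_of_mem _ hmem
  simp only [sepAx, Sentence.Realize, BoundedFormula.realize_alls] at this
  intro c a
  have h2 := this ![c]
  simp only [BoundedFormula.realize_all, BoundedFormula.realize_ex,
    BoundedFormula.realize_iff, BoundedFormula.realize_inf, BoundedFormula.realize_rel₂ (L := setLang) (R := MemRel.mem),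
    Term.realize_var, Sum.elim_inr] at h2
  obtain ⟨s, hs⟩ := h2 a
  refine ⟨s, fun z => ?_⟩
  have h4 := hs z
  simp only [memB, BoundedFormula.realize_rel₂ (L := setLang) (R := MemRel.mem), Term.realize_var, Sum.elim_inr,
    BoundedFormula.realize_liftAt (m := 1) (n := 1 + 1) (n' := 2) (by norm_num),
    BoundedFormula.realize_not, Function.comp_apply] at h4
  simpa [memr, Fin.snoc] using h4

theorem zfc_not_mem_self (x : K) : ¬(x ∈* x) := by
  intro hx
  obtain ⟨p, hp⟩ := zfc_pair hK x x
  obtain ⟨y, hy, hmin⟩ := zfc_foundation hK p ⟨x, (hp x).2 (Or.inl rfl)⟩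
  rcases (hp y).1 hy with h1 | h1 <;> subst h1 <;>
    exact hmin _ ⟨(hp _).2 (Or.inl rfl), hx⟩

theorem zfc_ord_mem_of_ssubset {a b : K} (ha : IsOrdSem a) (hb : IsOrdSem b)
    (hsub : ∀ z : K, (z ∈* a) → (z ∈* b)) (hne : a ≠ b) : a ∈* b := by
  obtain ⟨s, hs⟩ := zfc_sep_diff hK a b
  have hne' : ∃ y : K, y ∈* s := by
    by_contra hemp
    push_neg at hemp
    refine hne (zfc_ext hK a b fun z => ⟨hsub z, fun hz => ?_⟩)
    by_contra hza
    exact hemp z ((hs z).2 ⟨hz, hza⟩)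
  obtain ⟨g, hg, hmin⟩ := zfc_foundation hK s hne'
  obtain ⟨hgb, hga⟩ := (hs g).1 hg
  have : g = a := by
    refine zfc_ext hK g a fun z => ⟨fun hz => ?_, fun hz => ?_⟩
    · by_contra hza
      exact hmin z ⟨(hs z).2 ⟨hb.1 z g hz hgb, hza⟩, hz⟩
    · have hzb := hsub z hz
      rcases hb.2 z g hzb hgb with h1 | rfl | h1
      · exact h1
      · exact absurd hz hga
      · exact absurd (ha.1 g z h1 hz) hga
  exact this ▸ hgb

theorem zfc_ord_trichotomy {a b : K} (ha : IsOrdSem a) (hb : IsOrdSem b) :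
    (a ∈* b) ∨ a = b ∨ (b ∈* a) := by
  obtain ⟨s, hs⟩ := zfc_sep_inter hK b a
  have hsa : ∀ z : K, (z ∈* s) → (z ∈* a) := fun z hz => ((hs z).1 hz).1
  have hsb : ∀ z : K, (z ∈* s) → (z ∈* b) := fun z hz => ((hs z).1 hz).2
  have hos : IsOrdSem s := by
    constructor
    · intro z w hzw hws
      exact (hs z).2 ⟨ha.1 z w hzw (hsa w hws), hb.1 z w hzw (hsb w hws)⟩
    · intro z w hz hw
      exact ha.2 z w (hsa z hz) (hsa w hw)
  by_cases hea : s = a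
  · by_cases heb : s = b
    · exact Or.inr (Or.inl (hea ▸ heb))
    · exact Or.inl (hea ▸ zfc_ord_mem_of_ssubset hK hos hb hsb heb)
  · have hsma : s ∈* a := zfc_ord_mem_of_ssubset hK hos ha hsa hea
    by_cases heb : s = b
    · exact Or.inr (Or.inr (heb ▸ hsma))
    · have hsmb : s ∈* b := zfc_ord_mem_of_ssubset hK hos hb hsb heb
      exact absurd ((hs s).2 ⟨hsma, hsmb⟩) (zfc_not_mem_self hK s)

end Semantics

/-- Membership in `ω` transfers along elementary embeddings. -/
theorem mem_omegaSet_map_iff {M N : Type*} [setLang.Structure M] [setLang.Structure N]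
    (h : M ↪ₑ[setLang] N) (x : M) :
    h x ∈ omegaSet (L := setLang) MemRel.mem N ↔
      x ∈ omegaSet (L := setLang) MemRel.mem M := by
  have h1 := h.map_formula (natFormula (L := setLang) MemRel.mem M)
    (Sum.elim id fun _ => x)
  have h2 : ((h : M → N) ∘ (Sum.elim id fun _ => x : M ⊕ Fin 1 → M)) =
      Sum.elim (fun y : M => h y) fun _ => h x := by
    funext z; cases z <;> rfl
  rw [h2] at h1
  rw [mem_omegaSet_iff, ← realize_natFormula (fun y : M => h y) (h x), h1]
  exact Iff.rfl

end CMST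


namespace CMST

open FirstOrder FirstOrder.Language

/-- Let `M ⊨ ZFC` and let `p(v)` be an ω-minimal type over `M`.  Then
`p(v)` is ω-end extensional: whenever `N` is an elementary end extension of `M` obtained
by adjoining a witness for `p(v)`, for every `α ∈ ω^M` and every `β ∈ ω^N \ ω^M` we have
`α < β`. -/
theorem omegaMinimal_omega_end_extensional
    (M : Type) [setLang.Structure M] (hM : M ⊨ ZFC)
    (p : Set (setLang.Formula (M ⊕ Fin 1))) (hp : OmegaMinimal MemRel.mem M p)
    (N : Type) [setLang.Structure N] (h : M ↪ₑ[setLang] N) (d : N)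
    (hwit : WitnessExtension MemRel.mem M N p h d)
    (hend : IsEndExtension (L := setLang) MemRel.mem h) :
    ∀ a ∈ omegaSet (L := setLang) MemRel.mem M, ∀ b ∈ omegaSet (L := setLang) MemRel.mem N,
      b ∉ h '' omegaSet (L := setLang) MemRel.mem M →
        memr (L := setLang) MemRel.mem (h a) b := by
  intro a ha b hb hnb
  have hN : N ⊨ ZFC := (h.theory_model_iff ZFC).1 hM
  have hha : h a ∈ omegaSet (L := setLang) MemRel.mem N :=
    (mem_omegaSet_map_iff h a).2 ha
  have oa : IsOrdSem (h a) := ((mem_omegaSet_iff (h a)).1 hha).isOrdSem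
  have ob : IsOrdSem b := ((mem_omegaSet_iff b).1 hb).isOrdSem
  rcases zfc_ord_trichotomy hN oa ob with h1 | h1 | h1
  · exact h1
  · exact absurd ⟨a, ha, h1⟩ hnb
  · obtain ⟨a', ha'⟩ := hend b a h1
    refine absurd ⟨a', ?_, ha'⟩ hnb
    rw [← mem_omegaSet_map_iff h a', ha']
    exact hb

end CMST
end

section
/- There is no absolutely Δ^1_2 reduction from E_{ω₁} to any Borel equivalence relation: if f were such a reduction to a Borel equivalence relation E, then x ↦ a code for the E-class [f(x)]_E would be an absolutely Δ^1_2 injection from codes for countable ordinals to codes for sets of reals of bounded Borel rank, and no such mapping exists. -/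
/-! ## Basic syntax: the language of set theory, with and without a global choice
function symbol, and the first-order theories ZF, ZFC, ZFGC. -/

open FirstOrder FirstOrder.Language

/-! ## Pointclasses: coanalytic sets, Σ¹₂/Π¹₂ sets, Δ¹₂ functions, Π¹₁-ranks,
Boolean combinations of analytic sets. -/

namespace CMST

open MeasureTheory

/-- A set is coanalytic (Π¹₁) if its complement is analytic. -/
def IsCoanalytic {X : Type*} [TopologicalSpace X] (A : Set X) : Prop :=
  AnalyticSet Aᶜ

/-- A set is Σ¹₂ if it is the projection of a coanalytic subset of `X × ℕ^ℕ`. -/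
def IsSigma12 {X : Type*} [TopologicalSpace X] (A : Set X) : Prop :=
  ∃ C : Set (X × (ℕ → ℕ)), IsCoanalytic C ∧ A = {x | ∃ y, (x, y) ∈ C}

/-- A set is Π¹₂ if its complement is Σ¹₂. -/
def IsPi12 {X : Type*} [TopologicalSpace X] (A : Set X) : Prop :=
  IsSigma12 Aᶜ

/-- An absolutely Δ¹₂ function: a function which has both Σ¹₂ and Π¹₂ definitions
(which remain equivalent in all forcing extensions); formalized here by requiring the
graph to be both Σ¹₂ and Π¹₂. -/
def AbsolutelyDelta12Fun {X Y : Type*} [TopologicalSpace X] [TopologicalSpace Y]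
    (f : X → Y) : Prop :=
  IsSigma12 {p : X × Y | f p.1 = p.2} ∧ IsPi12 {p : X × Y | f p.1 = p.2}

/-- An absolutely Δ¹₂ reduction of `E` to `F`. -/
def AbsolutelyDelta12Reducible {X Y : Type*} [TopologicalSpace X] [TopologicalSpace Y]
    (E : X → X → Prop) (F : Y → Y → Prop) : Prop :=
  ∃ f : X → Y, AbsolutelyDelta12Fun f ∧ ∀ x y : X, E x y ↔ F (f x) (f y)

/-- `r` is a Π¹₁-rank on the (coanalytic) set `A`: there are an analytic relation `S` and
a coanalytic relation `P` such that for `y ∈ A`, the relation `x ∈ A ∧ r x ≤ r y`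
coincides with both `S` and `P`. -/
def IsPi11Rank {X : Type*} [TopologicalSpace X] (A : Set X) (r : X → Ordinal.{0}) : Prop :=
  ∃ S P : Set (X × X), AnalyticSet S ∧ IsCoanalytic P ∧
    ∀ x y : X, y ∈ A →
      (((x ∈ A ∧ r x ≤ r y) ↔ (x, y) ∈ S) ∧ ((x ∈ A ∧ r x ≤ r y) ↔ (x, y) ∈ P))

/-- Boolean combinations of analytic sets: the smallest class containing the analytic
sets and closed under complements and binary unions. -/
inductive BoolCombAnalytic {X : Type*} [TopologicalSpace X] : Set X → Prop
  | of_analytic (s : Set X) : AnalyticSet s → BoolCombAnalytic s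
  | compl (s : Set X) : BoolCombAnalytic s → BoolCombAnalytic sᶜ
  | union (s t : Set X) : BoolCombAnalytic s → BoolCombAnalytic t →
      BoolCombAnalytic (s ∪ t)

end CMST

/-! ## Auxiliary spaces: `E₀`, codes for well-orders, codes for trees, and infinite games. -/

namespace CMST

attribute [local instance] Classical.propDecidable

/-- The eventual-equality relation `E₀` on `2^ω`. -/
def E0 (x y : ℕ → Bool) : Prop := ∃ N : ℕ, ∀ n ≥ N, x n = y n

/-! ### Codes for countable well-orders -/

/-- The field of (the relation coded by) `x : ℕ → ℕ → Bool`. -/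
def fieldOf (x : ℕ → ℕ → Bool) : Set ℕ :=
  {a | ∃ b, x a b = true ∨ x b a = true}

/-- `x` codes a (countable) well-order: a transitive, irreflexive relation, total on its
field, whose restriction to its field is well-founded. -/
def IsWOCode (x : ℕ → ℕ → Bool) : Prop :=
  (∀ a b c, x a b = true → x b c = true → x a c = true) ∧
  (∀ a, ¬x a a = true) ∧
  (∀ a ∈ fieldOf x, ∀ b ∈ fieldOf x, x a b = true ∨ a = b ∨ x b a = true) ∧
  WellFounded fun a b : ↥(fieldOf x) => x a.1 b.1 = true

/-- The set of codes of countable well-orders. -/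
def WOCodes : Set (ℕ → ℕ → Bool) := {x | IsWOCode x}

/-- The order type of the well-order coded by `x` (and `0` if `x` is not well-founded). -/
noncomputable def otypeOf (x : ℕ → ℕ → Bool) : Ordinal.{0} :=
  if h : WellFounded fun a b : ↥(fieldOf x) => x a.1 b.1 = true then
    ⨆ a : ↥(fieldOf x), Order.succ ((h.apply a).rank)
  else 0

/-- `E_{ω₁}`: isomorphism of codes for countable well-orders. -/
def EOmega1 (x y : ↥WOCodes) : Prop :=
  ∃ e : ↥(fieldOf x.1) ≃ ↥(fieldOf y.1),
    ∀ a b : ↥(fieldOf x.1), x.1 a.1 b.1 = true ↔ y.1 (e a).1 (e b).1 = true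

/-! ### Codes for countable trees -/

/-- `x : List ℕ → Bool` codes a tree on `ℕ`: a nonempty set of finite sequences closed
under initial segments. -/
def IsTreeCode (x : List ℕ → Bool) : Prop :=
  x [] = true ∧ ∀ (s : List ℕ) (n : ℕ), x (s ++ [n]) = true → x s = true

/-- The strict reverse-extension relation on the nodes of the tree coded by `x`. -/
def treeRel (x : List ℕ → Bool) (a b : {s : List ℕ // x s = true}) : Prop :=
  b.1 <+: a.1 ∧ b.1 ≠ a.1

/-- `x` codes a well-founded tree. -/
def IsWFTreeCode (x : List ℕ → Bool) : Prop :=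
  IsTreeCode x ∧ WellFounded (treeRel x)

/-- The rank of (the code of) a well-founded tree: the ordinal rank of its root. -/
noncomputable def treeRankOf (x : List ℕ → Bool) : Ordinal.{0} :=
  if h : IsWFTreeCode x then (h.2.apply ⟨[], h.1.1⟩).rank else 0

/-- Isomorphism of coded trees: a bijection of the nodes preserving the tree (initial
segment) order. -/
def TreeIso (x y : List ℕ → Bool) : Prop :=
  ∃ e : {s : List ℕ // x s = true} ≃ {s : List ℕ // y s = true},
    ∀ a b : {s : List ℕ // x s = true}, a.1 <+: b.1 ↔ (e a).1 <+: (e b).1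

/-! ### Infinite games with two players alternately playing binary digits -/

/-- The history of the first `n` moves when player I uses strategy `σ` (moving at even
stages) and player II uses strategy `τ` (moving at odd stages). -/
def gameRun (σ τ : List Bool → Bool) : ℕ → List Bool
  | 0 => []
  | n + 1 => gameRun σ τ n ++ [if Even n then σ (gameRun σ τ n) else τ (gameRun σ τ n)]

/-- The infinite play resulting from strategies `σ` (player I) and `τ` (player II). -/
def gamePlay (σ τ : List Bool → Bool) (n : ℕ) : Bool :=
  if Even n then σ (gameRun σ τ n) else τ (gameRun σ τ n)

/-- `σ` is a winning strategy for player I in the game with payoff set `W` for player II. -/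
def WinsI (W : Set (ℕ → Bool)) (σ : List Bool → Bool) : Prop :=
  ∀ τ : List Bool → Bool, gamePlay σ τ ∉ W

/-- `τ` is a winning strategy for player II in the game with payoff set `W` for player II. -/
def WinsII (W : Set (ℕ → Bool)) (τ : List Bool → Bool) : Prop :=
  ∀ σ : List Bool → Bool, gamePlay σ τ ∈ W

/-- The game with payoff set `W` (for player II) is determined. -/
def GameDetermined (W : Set (ℕ → Bool)) : Prop :=
  (∃ σ, WinsI W σ) ∨ ∃ τ, WinsII W τ

/-- The sequence of moves of player I extracted from a play. -/
def partI (z : ℕ → Bool) : ℕ → Bool := fun n => z (2 * n)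

/-- The sequence of moves of player II extracted from a play. -/
def partII (z : ℕ → Bool) : ℕ → Bool := fun n => z (2 * n + 1)

/-- Decoding an element of `2^ω` as a binary relation on `ℕ`, via the pairing function. -/
def decodeRel (z : ℕ → Bool) : ℕ → ℕ → Bool := fun a b => z (Nat.pair a b)

end CMST

namespace CMST

open FirstOrder FirstOrder.Language

attribute [local instance] Classical.propDecidable

open Cardinal Ordinal Set

private lemma wo_no_descending {α : Type*} {r : α → α → Prop} (h : WellFounded r)
    (g : ℕ → α) (hg : ∀ n, r (g (n + 1)) (g n)) : False := by
  have key : ∀ a, ¬ ∃ n, g n = a := fun a => by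
    induction a using h.induction with
    | _ a IH =>
      rintro ⟨n, rfl⟩
      exact IH (g (n + 1)) (hg n) ⟨n + 1, rfl⟩
  exact key (g 0) ⟨0, rfl⟩

private lemma wf_of_no_descending {α : Type*} {r : α → α → Prop}
    (h : ∀ g : ℕ → α, ¬ ∀ n, r (g (n + 1)) (g n)) : WellFounded r := by
  by_contra hwf
  have hne : ∃ a, ¬ Acc r a := by
    by_contra h2
    push_neg at h2
    exact hwf ⟨h2⟩
  have step : ∀ a : {a // ¬ Acc r a}, ∃ b : {a // ¬ Acc r a}, r b.1 a.1 := by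
    rintro ⟨a, ha⟩
    by_contra hb
    push_neg at hb
    exact ha (Acc.intro a fun b hb' => by_contra fun hbacc => (hb ⟨b, hbacc⟩ hb').elim)
  choose f hf using step
  obtain ⟨a0, ha0⟩ := hne
  exact h (fun n => (f^[n] ⟨a0, ha0⟩).1) fun n => by
    show r (f^[n + 1] ⟨a0, ha0⟩).1 (f^[n] ⟨a0, ha0⟩).1
    rw [Function.iterate_succ_apply']
    exact hf _

private lemma wo_rank_lt_omega1 {α : Type} [Countable α] {r : α → α → Prop}
    (h : WellFounded r) (a : α) : (h.apply a).rank < (aleph 1).ord := by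
  induction a using h.induction with
  | _ a IH =>
    rw [Acc.rank_eq]
    refine Cardinal.iSup_lt_ord_lift_of_isRegular Cardinal.isRegular_aleph_one ?_ ?_
    · rw [Cardinal.lift_id]
      exact Cardinal.mk_le_aleph0.trans_lt Cardinal.aleph0_lt_aleph_one
    · rintro ⟨b, hb⟩
      exact (Cardinal.isSuccLimit_ord (Cardinal.aleph0_le_aleph 1)).succ_lt (IH b hb)

private lemma zero_isWOCode : IsWOCode (fun _ _ => false) := by
  refine ⟨fun a b c h _ => by simp at h, fun a h => by simp at h, fun a ha => ?_, ?_⟩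
  · obtain ⟨b, h | h⟩ := ha <;> simp at h
  · constructor
    rintro ⟨a, b, h | h⟩ <;> simp at h


/-- `z` extends the finite sequence `s`. -/
private def Ext (z : ℕ → ℕ) (s : List ℕ) : Prop := ∀ i < s.length, z i = s.getD i 0

private lemma ext_nil (z : ℕ → ℕ) : Ext z [] := fun i hi => absurd hi (by simp)

private lemma getD_of_prefix {l₁ l₂ : List ℕ} (h : l₁ <+: l₂) {i : ℕ} (hi : i < l₁.length) :
    l₂.getD i 0 = l₁.getD i 0 := by
  obtain ⟨t, rfl⟩ := h
  rw [List.getD_eq_getElem _ _ hi,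
    List.getD_eq_getElem _ _ (hi.trans_le (by simp)), List.getElem_append_left hi]

/-- The Kunen–Martin relation associated with `Φ`. -/
private def KMrel (Φ : (ℕ → ℕ) → (ℕ → ℕ → Bool)) : (List ℕ × ℕ) → (List ℕ × ℕ) → Prop :=
  fun q p => p.1 <+: q.1 ∧ p.1.length < q.1.length ∧
    ∀ z : ℕ → ℕ, Ext z q.1 → Φ z q.2 p.2 = true

private lemma KM_wf {Φ : (ℕ → ℕ) → (ℕ → ℕ → Bool)} (hwo : ∀ z, IsWOCode (Φ z)) :
    WellFounded (KMrel Φ) := by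
  apply wf_of_no_descending
  intro g hg
  set s : ℕ → List ℕ := fun n => (g n).1 with hs
  have hpre : ∀ k m, k ≤ m → s k <+: s m := by
    intro k m hkm
    induction m with
    | zero => rw [Nat.le_zero.mp hkm]
    | succ m IHm =>
      rcases Nat.lt_or_ge k (m + 1) with hk | hk
      · exact (IHm (Nat.lt_succ_iff.mp hk)).trans (hg m).1
      · rw [Nat.le_antisymm hkm hk]
  have hlen : ∀ n, n ≤ (s n).length := by
    intro n
    induction n with
    | zero => exact Nat.zero_le _
    | succ n IHn => exact Nat.lt_of_le_of_lt IHn (hg n).2.1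
  set z : ℕ → ℕ := fun i => (s (i + 1)).getD i 0 with hz
  have hzext : ∀ k, Ext z (s k) := by
    intro k i hik
    have hi1 : i < (s (i + 1)).length := Nat.lt_of_lt_of_le (Nat.lt_succ_self i) (hlen (i + 1))
    show (s (i + 1)).getD i 0 = (s k).getD i 0
    rcases Nat.le_total (i + 1) k with hik' | hik'
    · exact (getD_of_prefix (hpre _ _ hik') hi1).symm
    · exact getD_of_prefix (hpre _ _ hik') hik
  have hstep : ∀ n, Φ z (g (n + 1)).2 (g n).2 = true :=
    fun n => (hg n).2.2 z (hzext (n + 1))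
  have hmem : ∀ n, (g n).2 ∈ fieldOf (Φ z) := by
    intro n
    exact ⟨(g (n + 1)).2, Or.inr (hstep n)⟩
  exact wo_no_descending (hwo z).2.2.2 (fun n => ⟨(g n).2, hmem n⟩) hstep

private lemma cylinder_of_open {U : Set (ℕ → ℕ)} (hU : IsOpen U) {z : ℕ → ℕ} (hz : z ∈ U) :
    ∃ n : ℕ, ∀ w : ℕ → ℕ, (∀ i < n, w i = z i) → w ∈ U := by
  rcases isOpen_pi_iff.mp hU z hz with ⟨I, u, hu, hI⟩
  refine ⟨(I.sup id) + 1, fun w hw => hI fun i hi => ?_⟩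
  rw [hw i (Nat.lt_succ_of_le (Finset.le_sup (f := id) hi))]
  exact (hu i hi).2

private lemma KM_rank_bound {Φ : (ℕ → ℕ) → (ℕ → ℕ → Bool)} (hΦ : Continuous Φ)
    (hwo : ∀ z, IsWOCode (Φ z)) (hwf : WellFounded (KMrel Φ)) (z : ℕ → ℕ) :
    ∀ a : ↥(fieldOf (Φ z)), ∀ s : List ℕ, Ext z s →
      (((hwo z).2.2.2).apply a).rank ≤ (hwf.apply (s, a.1)).rank := by
  intro a
  induction a using ((hwo z).2.2.2).induction with
  | _ a IH =>
    intro s hs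
    rw [Acc.rank_eq]
    apply Ordinal.iSup_le
    rintro ⟨b, hb⟩
    -- hb : Φ z b.1 a.1 = true
    have hcont : Continuous fun w => Φ w b.1 a.1 :=
      (continuous_apply a.1).comp ((continuous_apply b.1).comp hΦ)
    have hUopen : IsOpen {w : ℕ → ℕ | Φ w b.1 a.1 = true} :=
      hcont.isOpen_preimage {true} (isOpen_discrete _)
    obtain ⟨n, hn⟩ := cylinder_of_open hUopen hb
    set n' : ℕ := max n (s.length + 1) with hn'
    set s' : List ℕ := List.ofFn (fun i : Fin n' => z i) with hs'
    have hs'len : s'.length = n' := by simp [hs']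
    have hs'get : ∀ i, i < n' → s'.getD i 0 = z i := by
      intro i hi
      rw [List.getD_eq_getElem _ _ (by simpa [hs'len] using hi)]
      simp [hs']
    have hext' : Ext z s' := fun i hi => (hs'get i (by simpa [hs'len] using hi)).symm
    have hpre : s <+: s' := by
      rw [List.prefix_iff_eq_take]
      apply List.ext_getElem
      · rw [List.length_take, hs'len]
        exact (Nat.min_eq_left (le_trans (Nat.le_succ _) (le_max_right _ _))).symm
      · intro i hi hi'
        have hin' : i < n' := lt_of_lt_of_le hi (le_trans (Nat.le_succ _) (le_max_right _ _))
        rw [List.getElem_take]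
        rw [← List.getD_eq_getElem s' 0, hs'get i hin', ← List.getD_eq_getElem s 0 hi]
        exact (hs i hi).symm
    have hKM : KMrel Φ (s', b.1) (s, a.1) := by
      refine ⟨hpre, ?_, ?_⟩
      · rw [hs'len]; exact lt_of_lt_of_le (Nat.lt_succ_self _) (le_max_right _ _)
      · intro w hw
        apply hn
        intro i hi
        have hin' : i < n' := lt_of_lt_of_le hi (le_max_left _ _)
        rw [hw i (by simpa [hs'len] using hin'), hs'get i hin']
    calc Order.succ ((((hwo z).2.2.2).apply b).rank)
        ≤ Order.succ ((hwf.apply (s', b.1)).rank) := Order.succ_le_succ (IH b hb s' hext')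
      _ ≤ (hwf.apply (s, a.1)).rank := Order.succ_le_of_lt (Acc.rank_lt_of_rel _ hKM)


private lemma exists_big_code (L : Ordinal.{0}) (hL : L < (Cardinal.aleph 1).ord) :
    ∃ (x : ℕ → ℕ → Bool) (hx : IsWOCode x) (a : ↥(fieldOf x)),
      L + 1 ≤ ((hx.2.2.2).apply a).rank := by
  have hlim : Order.IsSuccLimit ((Cardinal.aleph 1).ord) := Cardinal.isSuccLimit_ord (Cardinal.aleph0_le_aleph 1)
  have h2 : L + 2 < (Cardinal.aleph 1).ord := by
    have := hlim.succ_lt (hlim.succ_lt hL)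
    rwa [← Ordinal.add_one_eq_succ, ← Ordinal.add_one_eq_succ, add_assoc,
      one_add_one_eq_two] at this
  haveI : Countable (L + 2).ToType := by
    rw [← Cardinal.mk_le_aleph0_iff, Cardinal.mk_toType]
    have := Cardinal.lt_ord.mp h2
    rw [← Cardinal.succ_aleph0] at this
    exact Order.lt_succ_iff.mp this
  haveI : IsWellOrder (L + 2).ToType ((· < ·) : (L + 2).ToType → (L + 2).ToType → Prop) :=
    isWellOrder_lt
  obtain ⟨j, hj⟩ := exists_injective_nat (L + 2).ToType
  set x : ℕ → ℕ → Bool :=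
    fun p q => decide (∃ u v : (L + 2).ToType, j u = p ∧ j v = q ∧ u < v) with hxdef
  have hxx : ∀ p q, x p q = true ↔ ∃ u v : (L + 2).ToType, j u = p ∧ j v = q ∧ u < v := by
    intro p q
    simp only [hxdef, decide_eq_true_eq]
  have hfield : ∀ e ∈ fieldOf x, ∃ u : (L + 2).ToType, j u = e := by
    rintro e ⟨b, hb | hb⟩
    · obtain ⟨u, v, hu, hv, huv⟩ := (hxx _ _).mp hb
      exact ⟨u, hu⟩
    · obtain ⟨u, v, hu, hv, huv⟩ := (hxx _ _).mp hb
      exact ⟨v, hv⟩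
  have htrans : ∀ a b c, x a b = true → x b c = true → x a c = true := by
    intro a b c hab hbc
    obtain ⟨u, v, hu, hv, huv⟩ := (hxx _ _).mp hab
    obtain ⟨u', v', hu', hv', huv'⟩ := (hxx _ _).mp hbc
    have : u' = v := hj (hu'.trans hv.symm)
    exact (hxx _ _).mpr ⟨u, v', hu, hv', huv.trans (this ▸ huv')⟩
  have hirr : ∀ a, ¬x a a = true := by
    intro a ha
    obtain ⟨u, v, hu, hv, huv⟩ := (hxx _ _).mp ha
    exact absurd (hj (hu.trans hv.symm) ▸ huv) (lt_irrefl v)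
  have htot : ∀ a ∈ fieldOf x, ∀ b ∈ fieldOf x, x a b = true ∨ a = b ∨ x b a = true := by
    intro a ha b hb
    obtain ⟨u, rfl⟩ := hfield a ha
    obtain ⟨v, rfl⟩ := hfield b hb
    rcases lt_trichotomy u v with h | h | h
    · exact Or.inl ((hxx _ _).mpr ⟨u, v, rfl, rfl, h⟩)
    · exact Or.inr (Or.inl (by rw [h]))
    · exact Or.inr (Or.inr ((hxx _ _).mpr ⟨v, u, rfl, rfl, h⟩))
  have hwf : WellFounded fun a b : ↥(fieldOf x) => x a.1 b.1 = true := by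
    have hm : ∀ a : ↥(fieldOf x), ∃ u : (L + 2).ToType, j u = a.1 := fun a => hfield a.1 a.2
    choose m hmspec using hm
    refine Subrelation.wf ?_ (InvImage.wf m (wellFounded_lt))
    intro a b hab
    obtain ⟨u, v, hu, hv, huv⟩ := (hxx _ _).mp hab
    have hu' : u = m a := hj (hu.trans (hmspec a).symm)
    have hv' : v = m b := hj (hv.trans (hmspec b).symm)
    show m a < m b
    rw [← hu', ← hv']
    exact huv
  have hxwo : IsWOCode x := ⟨htrans, hirr, htot, hwf⟩
  -- rank lower bound
  have htype : Ordinal.type ((· < ·) : (L + 2).ToType → (L + 2).ToType → Prop) = L + 2 := Ordinal.type_toType (L + 2)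
  have hrank : ∀ u : (L + 2).ToType, ∀ hu : j u ∈ fieldOf x,
      Ordinal.typein ((· < ·) : (L + 2).ToType → (L + 2).ToType → Prop) u ≤ ((hwf.apply ⟨j u, hu⟩).rank) := by
    intro u
    induction u using (wellFounded_lt (α := (L + 2).ToType)).induction with
    | _ u IH =>
      intro hu
      apply le_of_forall_lt
      intro γ hγ
      have hγ' : γ < Ordinal.type ((· < ·) : (L + 2).ToType → (L + 2).ToType → Prop) :=
        hγ.trans (Ordinal.typein_lt_type _ u)
      obtain ⟨v, hveq⟩ := Ordinal.typein_surj _ hγ'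
      have hvu : v < u := (Ordinal.typein_lt_typein _).mp (by rw [hveq]; exact hγ)
      have hrel : x (j v) (j u) = true := (hxx _ _).mpr ⟨v, u, rfl, rfl, hvu⟩
      have hvf : j v ∈ fieldOf x := ⟨j u, Or.inl hrel⟩
      calc γ = Ordinal.typein ((· < ·) : (L + 2).ToType → (L + 2).ToType → Prop) v := hveq.symm
        _ ≤ (hwf.apply ⟨j v, hvf⟩).rank := IH v hvu hvf
        _ < (hwf.apply ⟨j u, hu⟩).rank :=
          Acc.rank_lt_of_rel (a := (⟨j v, hvf⟩ : ↥(fieldOf x))) (hwf.apply ⟨j u, hu⟩) hrel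
  have h12 : L + 1 < L + 2 := (add_lt_add_iff_left L).mpr one_lt_two
  have h1 : L + 1 < Ordinal.type ((· < ·) : (L + 2).ToType → (L + 2).ToType → Prop) := by rw [htype]; exact h12
  have h0 : (0 : Ordinal) < Ordinal.type ((· < ·) : (L + 2).ToType → (L + 2).ToType → Prop) :=
    lt_of_le_of_lt (zero_le (a := L + 1)) h1
  set u1 : (L + 2).ToType := Ordinal.enum _ ⟨L + 1, h1⟩ with hu1
  set u0 : (L + 2).ToType := Ordinal.enum _ ⟨0, h0⟩ with hu0
  have hu01 : u0 < u1 := by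
    rw [← Ordinal.typein_lt_typein ((· < ·) : (L + 2).ToType → (L + 2).ToType → Prop), hu0, hu1,
      Ordinal.typein_enum, Ordinal.typein_enum]
    exact lt_of_le_of_lt (zero_le (a := L)) (by
      rw [Ordinal.add_one_eq_succ]; exact Order.lt_succ L)
  have hrel01 : x (j u0) (j u1) = true := (hxx _ _).mpr ⟨u0, u1, rfl, rfl, hu01⟩
  have hmem1 : j u1 ∈ fieldOf x := ⟨j u0, Or.inr hrel01⟩
  refine ⟨x, hxwo, ⟨j u1, hmem1⟩, ?_⟩
  calc L + 1 = Ordinal.typein ((· < ·) : (L + 2).ToType → (L + 2).ToType → Prop) u1 := (Ordinal.typein_enum _ _).symm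
    _ ≤ ((hwf.apply ⟨j u1, hmem1⟩).rank) := hrank u1 hmem1

private lemma WOCodes_not_analytic :
    ¬ ∃ Ψ : (ℕ → ℕ) → (ℕ → ℕ → Bool), Continuous Ψ ∧ Set.range Ψ = WOCodes := by
  rintro ⟨Ψ, hc, hr⟩
  have hwo : ∀ z, IsWOCode (Ψ z) := by
    intro z
    have : Ψ z ∈ WOCodes := by rw [← hr]; exact Set.mem_range_self z
    exact this
  have hwf := KM_wf hwo
  set L : Ordinal.{0} := ⨆ q : List ℕ × ℕ, (hwf.apply q).rank with hLdef
  have hL : L < (Cardinal.aleph 1).ord := by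
    refine Cardinal.iSup_lt_ord_lift_of_isRegular Cardinal.isRegular_aleph_one ?_
      fun q => wo_rank_lt_omega1 hwf q
    rw [Cardinal.lift_id]
    exact Cardinal.mk_le_aleph0.trans_lt Cardinal.aleph0_lt_aleph_one
  obtain ⟨x, hx, a, ha⟩ := exists_big_code L hL
  have hxW : x ∈ Set.range Ψ := by rw [hr]; exact hx
  obtain ⟨z, hz⟩ := hxW
  subst hz
  have hb := KM_rank_bound hc hwo hwf z a [] (ext_nil z)
  have hle : ((hx.2.2.2).apply a).rank ≤ L :=
    le_trans hb (Ordinal.le_iSup (fun q : List ℕ × ℕ => (hwf.apply q).rank) ([], a.1))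
  have : L + 1 ≤ L := le_trans ha hle
  have hlt : L < L + 1 := by
    rw [Ordinal.add_one_eq_succ]
    exact Order.lt_succ L
  exact absurd (lt_of_lt_of_le hlt this) (lt_irrefl L)


/-- There is no absolutely `Δ¹₂` reduction from `E_{ω₁}` to any Borel
equivalence relation. -/
theorem EOmega1_not_delta12_reducible_to_borel :
    ∀ (Y : Type) [TopologicalSpace Y] [MeasurableSpace Y] [BorelSpace Y] [PolishSpace Y],
      ∀ F : Y → Y → Prop, Equivalence F → MeasurableSet {q : Y × Y | F q.1 q.2} →
        ¬AbsolutelyDelta12Reducible EOmega1 F := by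
  intro Y _ _ _ _ F _hF _hmeas hred
  obtain ⟨f, hf, -⟩ := hred
  obtain ⟨-, hPi⟩ := hf
  obtain ⟨C, hC, hCeq⟩ := hPi
  have hGC : ∀ p : ↥WOCodes × Y, f p.1 = p.2 → ∀ w : ℕ → ℕ, (p, w) ∈ Cᶜ := by
    intro p hp w hw
    have hmem : p ∈ {p : ↥WOCodes × Y | f p.1 = p.2}ᶜ := by
      rw [hCeq]; exact ⟨w, hw⟩
    exact hmem hp
  have hC2 : MeasureTheory.AnalyticSet Cᶜ := hC
  rw [MeasureTheory.AnalyticSet_def] at hC2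
  have hC' : Cᶜ = ∅ ∨ ∃ g : (ℕ → ℕ) → (↥WOCodes × Y) × (ℕ → ℕ),
      Continuous g ∧ Set.range g = Cᶜ := hC2
  set x0 : ↥WOCodes := ⟨fun _ _ => false, zero_isWOCode⟩ with hx0
  rcases hC' with hemp | ⟨g, hgc, hgr⟩
  · have := hGC (x0, f x0) rfl (fun _ => 0)
    rw [hemp] at this
    exact this
  · apply WOCodes_not_analytic
    refine ⟨fun v => ((g v).1.1 : ↥WOCodes).1, ?_, ?_⟩
    · exact continuous_subtype_val.comp ((continuous_fst.comp continuous_fst).comp hgc)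
    · apply Set.eq_of_subset_of_subset
      · rintro y ⟨v, rfl⟩
        exact ((g v).1.1).2
      · intro y hy
        have hmem : ((⟨y, hy⟩, f ⟨y, hy⟩), fun _ => 0) ∈ Cᶜ := hGC _ rfl _
        rw [← hgr] at hmem
        obtain ⟨v, hv⟩ := hmem
        refine ⟨v, ?_⟩
        show ((g v).1.1 : ℕ → ℕ → Bool) = y
        rw [hv]

end CMST
end
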